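/- Let d ≥ 1 be an integer and a : ℝ^d → ℝ measurable with a ∈ L¹(ℝ^d) and a(x) = o(‖x‖^{−d}) as ‖x‖ → ∞ (i.e. ‖x‖^d·|a(x)| → 0 essentially as ‖x‖ → ∞). Then for every t > 0 and every η > 0 there exists R > 0 such that for a.e. x with ‖x‖ ≥ R one has |(g_t ⋆ a)(x)| ≤ η·‖x‖^{−d}; that is, for each fixed t > 0, (g_t ⋆ a)(x) = o(‖x‖^{−d}) as ‖x‖ → ∞. -/

import Mathlib

open MeasureTheory Filter Topology

/-! The Gaussian `g_t` is itself integrable and `o(‖x‖^{-d})`, so both factors of the convolution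
play the same role. For every `y`, either `‖y‖ ≥ ‖x‖/2` or `‖x - y‖ ≥ ‖x‖/2`: in the first case
the decay of `a` gives `‖x‖^d |a y| ≤ 2^d ε`, in the second the decay of `g_t` gives the same bound
for `g_t (x - y)`. Integrating the other factor costs only its `L¹` norm, so
`‖x‖^d |(g_t ⋆ a)(x)| ≤ 2^d ε (‖g_t‖₁ + ‖a‖₁)` once `‖x‖` is large. -/

def DecaysFasterThanInvPow {E : Type*} [Norm E] [MeasurableSpace E] (μ : Measure E) (p : ℕ)
    (f : E → ℝ) : Prop :=
  ∀ ε : ℝ, 0 < ε → ∃ R : ℝ, ∀ᵐ x ∂μ, R ≤ ‖x‖ → ‖x‖ ^ p * |f x| ≤ ε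

lemma pow_mul_abs_le_of_le_two_mul {r s u ε : ℝ} {p : ℕ} (hr : 0 ≤ r) (hrs : r ≤ 2 * s)
    (h : s ^ p * |u| ≤ ε) : r ^ p * |u| ≤ 2 ^ p * ε :=
  calc r ^ p * |u| ≤ (2 * s) ^ p * |u| := by gcongr
    _ = 2 ^ p * (s ^ p * |u|) := by ring
    _ ≤ 2 ^ p * ε := by gcongr

lemma mul_abs_mul_le_of_mul_abs_le {c M u v : ℝ} (hM : 0 ≤ M) (h : c * |v| ≤ M) :
    c * (|u| * |v|) ≤ M * (|u| + |v|) :=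
  calc c * (|u| * |v|) = |u| * (c * |v|) := by ring
    _ ≤ |u| * M := by gcongr
    _ ≤ M * (|u| + |v|) := by nlinarith [abs_nonneg u, abs_nonneg v]

lemma norm_pow_mul_abs_mul_le {E : Type*} [SeminormedAddCommGroup E] {x y : E} {u v R ε : ℝ}
    {p : ℕ} (hε : 0 ≤ ε) (hx : 2 * R ≤ ‖x‖)
    (hu : R ≤ ‖x - y‖ → ‖x - y‖ ^ p * |u| ≤ ε) (hv : R ≤ ‖y‖ → ‖y‖ ^ p * |v| ≤ ε) :
    ‖x‖ ^ p * |u * v| ≤ 2 ^ p * ε * (|u| + |v|) := by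
  have htri : ‖x‖ ≤ ‖x - y‖ + ‖y‖ := norm_le_norm_sub_add x y
  have hM : 0 ≤ 2 ^ p * ε := mul_nonneg (by positivity) hε
  rw [abs_mul]
  rcases le_total ‖x‖ (2 * ‖y‖) with hy | hxy
  · exact mul_abs_mul_le_of_mul_abs_le hM
      (pow_mul_abs_le_of_le_two_mul (norm_nonneg x) hy (hv (by linarith)))
  · rw [mul_comm |u|, add_comm |u|]
    exact mul_abs_mul_le_of_mul_abs_le hM
      (pow_mul_abs_le_of_le_two_mul (norm_nonneg x) (by linarith) (hu (by linarith)))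

section Convolution

variable {E : Type*} [NormedAddCommGroup E] [MeasurableSpace E] [BorelSpace E]
  [SecondCountableTopology E] {μ : Measure E} [SFinite μ] [μ.IsAddLeftInvariant] [μ.IsNegInvariant]
  {k a : E → ℝ} {p : ℕ}

lemma norm_pow_mul_abs_integral_sub_mul_le (hk : Integrable k μ) (ha : Integrable a μ)
    {R ε : ℝ} (hε : 0 ≤ ε) (hkR : ∀ᵐ z ∂μ, R ≤ ‖z‖ → ‖z‖ ^ p * |k z| ≤ ε)
    (haR : ∀ᵐ y ∂μ, R ≤ ‖y‖ → ‖y‖ ^ p * |a y| ≤ ε) {x : E} (hx : 2 * R ≤ ‖x‖) :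
    ‖x‖ ^ p * |∫ y, k (x - y) * a y ∂μ| ≤
      2 ^ p * ε * (∫ z, |k z| ∂μ + ∫ y, |a y| ∂μ) := by
  have hkx : Integrable (fun y => |k (x - y)|) μ := (hk.comp_sub_left x).abs
  have hkR' := (quasiMeasurePreserving_sub_left μ x).ae hkR
  have hbound : ∀ᵐ y ∂μ, ‖‖x‖ ^ p * (k (x - y) * a y)‖ ≤
      2 ^ p * ε * (|k (x - y)| + |a y|) := by
    filter_upwards [hkR', haR] with y hky hay
    rw [Real.norm_eq_abs, abs_mul, abs_of_nonneg (by positivity)]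
    exact norm_pow_mul_abs_mul_le hε hx hky hay
  calc ‖x‖ ^ p * |∫ y, k (x - y) * a y ∂μ|
      = ‖∫ y, ‖x‖ ^ p * (k (x - y) * a y) ∂μ‖ := by
        rw [integral_const_mul, Real.norm_eq_abs, abs_mul,
          abs_of_nonneg (pow_nonneg (norm_nonneg x) p)]
    _ ≤ ∫ y, 2 ^ p * ε * (|k (x - y)| + |a y|) ∂μ :=
        norm_integral_le_of_norm_le ((hkx.add ha.abs).const_mul _) hbound
    _ = 2 ^ p * ε * (∫ z, |k z| ∂μ + ∫ y, |a y| ∂μ) := by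
        rw [integral_const_mul, integral_add hkx ha.abs,
          integral_sub_left_eq_self (fun z => |k z|) μ x]

theorem DecaysFasterThanInvPow.integral_sub_mul (hk : DecaysFasterThanInvPow μ p k)
    (ha : DecaysFasterThanInvPow μ p a) (hki : Integrable k μ) (hai : Integrable a μ) :
    DecaysFasterThanInvPow μ p (fun x => ∫ y, k (x - y) * a y ∂μ) := by
  intro η hη
  set S := ∫ z, |k z| ∂μ + ∫ y, |a y| ∂μ
  have hS : 0 ≤ S := add_nonneg (integral_nonneg fun _ => abs_nonneg _)
    (integral_nonneg fun _ => abs_nonneg _)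
  have hden : 0 < 2 ^ p * S + 1 := by positivity
  set ε := η / (2 ^ p * S + 1)
  have hε : 0 < ε := div_pos hη hden
  obtain ⟨R₁, hR₁⟩ := hk ε hε
  obtain ⟨R₂, hR₂⟩ := ha ε hε
  refine ⟨2 * max R₁ R₂, Eventually.of_forall fun x hx => ?_⟩
  refine (norm_pow_mul_abs_integral_sub_mul_le hki hai hε.le
    (hR₁.mono fun z hz hzR => hz ((le_max_left _ _).trans hzR))
    (hR₂.mono fun z hz hzR => hz ((le_max_right _ _).trans hzR)) hx).trans ?_
  calc 2 ^ p * ε * S = ε * (2 ^ p * S) := by ring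
    _ ≤ ε * (2 ^ p * S + 1) := by gcongr; exact le_add_of_nonneg_right zero_le_one
    _ = η := div_mul_cancel₀ η hden.ne'

end Convolution

noncomputable def heatKernel (d : ℕ) (t : ℝ) (z : EuclideanSpace ℝ (Fin d)) : ℝ :=
  (4 * Real.pi * t) ^ (-(d : ℝ) / 2) * Real.exp (-‖z‖ ^ 2 / (4 * t))

lemma integrable_heatKernel {d : ℕ} {t : ℝ} (ht : 0 < t) : Integrable (heatKernel d t) := by
  have h := (GaussianFourier.integrable_cexp_neg_mul_sq_norm_add
    (b := ((4 * t)⁻¹ : ℝ)) (by simpa using ht) 0 (0 : EuclideanSpace ℝ (Fin d))).norm.const_mul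
    ((4 * Real.pi * t) ^ (-(d : ℝ) / 2))
  refine h.congr (Eventually.of_forall fun z => ?_)
  dsimp only [heatKernel]
  rw [Complex.norm_exp, zero_mul, add_zero, ← Complex.ofReal_pow,
    ← Complex.ofReal_neg, ← Complex.ofReal_mul, Complex.ofReal_re, neg_mul, inv_mul_eq_div,
    ← neg_div]

lemma decaysFasterThanInvPow_heatKernel {d : ℕ} {t : ℝ} (ht : 0 < t) (p : ℕ) :
    DecaysFasterThanInvPow volume p (heatKernel d t) := by
  have hrpow : Tendsto (fun r : ℝ => r ^ (p : ℝ) * Real.exp (-(4 * t)⁻¹ * r ^ 2)) atTop (𝓝 0) :=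
    (rpow_mul_exp_neg_mul_sq_isLittleO_exp_neg (by positivity) _).tendsto_zero_of_tendsto
      (Real.tendsto_exp_atBot.comp (tendsto_id.const_mul_atTop_of_neg (by norm_num)))
  have hpow : Tendsto (fun r : ℝ => (4 * Real.pi * t) ^ (-(d : ℝ) / 2) *
      (r ^ p * Real.exp (-r ^ 2 / (4 * t)))) atTop (𝓝 0) := by
    simpa using (hrpow.congr' ((eventually_ge_atTop 0).mono fun r _ => by
      rw [Real.rpow_natCast, neg_mul, neg_div, inv_mul_eq_div])).const_mul
      ((4 * Real.pi * t) ^ (-(d : ℝ) / 2))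
  intro ε hε
  obtain ⟨R, hR⟩ := eventually_atTop.1 (hpow.eventually_le_const hε)
  refine ⟨R, Eventually.of_forall fun z hz => le_of_eq_of_le ?_ (hR ‖z‖ hz)⟩
  rw [heatKernel, abs_of_nonneg (by positivity)]
  ring

theorem stmt9_general (d : ℕ)
    (a : EuclideanSpace ℝ (Fin d) → ℝ) (ha : Integrable a)
    (hdecay : ∀ η : ℝ, 0 < η → ∃ R : ℝ,
      ∀ᵐ x : EuclideanSpace ℝ (Fin d) ∂volume, R ≤ ‖x‖ → ‖x‖ ^ d * |a x| ≤ η) :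
    ∀ t : ℝ, 0 < t → ∀ η : ℝ, 0 < η → ∃ R > (0 : ℝ),
      ∀ᵐ x : EuclideanSpace ℝ (Fin d) ∂volume, R ≤ ‖x‖ →
        |∫ y, (4 * Real.pi * t) ^ (-(d : ℝ) / 2) * Real.exp (-‖x - y‖ ^ 2 / (4 * t)) * a y| ≤
          η * ‖x‖ ^ (-(d : ℝ)) := by
  intro t ht η hη
  obtain ⟨R, hR⟩ := (decaysFasterThanInvPow_heatKernel ht d).integral_sub_mul hdecay
    (integrable_heatKernel ht) ha η hη
  refine ⟨max R 1, by positivity, hR.mono fun x hx hxR => ?_⟩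
  have hx0 : 0 < ‖x‖ := by linarith [le_max_right R 1]
  rw [Real.rpow_neg hx0.le, Real.rpow_natCast, ← div_eq_mul_inv, le_div_iff₀ (by positivity),
    mul_comm]
  exact hx (le_of_max_le_left hxR)

/-- If `a ∈ L¹(ℝ^d)` and `a(x) = o(‖x‖^{−d})` essentially as
`‖x‖ → ∞`, then for each fixed `t > 0` the heat extension satisfies
`(g_t ⋆ a)(x) = o(‖x‖^{−d})` as `‖x‖ → ∞`: for every `η > 0` there is `R > 0`
such that `|(g_t ⋆ a)(x)| ≤ η ‖x‖^{−d}` for a.e. `x` with `‖x‖ ≥ R`. -/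
theorem stmt9 (d : ℕ) (hd : 1 ≤ d)
    (a : EuclideanSpace ℝ (Fin d) → ℝ) (ha : Integrable a)
    (hdecay : ∀ η : ℝ, 0 < η → ∃ R : ℝ,
      ∀ᵐ x : EuclideanSpace ℝ (Fin d) ∂volume, R ≤ ‖x‖ → ‖x‖ ^ d * |a x| ≤ η) :
    ∀ t : ℝ, 0 < t → ∀ η : ℝ, 0 < η → ∃ R > (0 : ℝ),
      ∀ᵐ x : EuclideanSpace ℝ (Fin d) ∂volume, R ≤ ‖x‖ →
        |∫ y, (4 * Real.pi * t) ^ (-(d : ℝ) / 2) * Real.exp (-‖x - y‖ ^ 2 / (4 * t)) * a y| ≤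
          η * ‖x‖ ^ (-(d : ℝ)) :=
  stmt9_general d a ha hdecay
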